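/- arXiv:1801.03234 — 5 statements merged into one kernel-verified Lean document; each statement's English description precedes it below -/
import Mathlib

section
/- If M is an n×n column stochastic matrix that is primitive (some power has all positive entries), then the equation (Id - M) u = m h, together with the constraint 1^T u = 0, has a unique solution u for any matrix m whose columns sum to zero, where h is the unique stationary distribution of M. Moreover, this solution is given by u = Q m h with Q = (Id - M + h 1^T)^{-1}. -/
open Matrix BigOperators

/-- Linear response equation for a primitive column-stochastic matrix:
the system `(Id - M) u = m h`, `1ᵀ u = 0` has the unique solution
`u = Q m h` with `Q = (Id - M + h 1ᵀ)⁻¹`. -/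
theorem stmt_0 {n : ℕ} (M : Matrix (Fin n) (Fin n) ℝ)
    (hM0 : ∀ i j, 0 ≤ M i j) (hMcol : ∀ j, ∑ i, M i j = 1)
    (hprim : ∃ N : ℕ, ∀ i j, 0 < (M ^ N) i j)
    (h : Fin n → ℝ) (hh0 : ∀ i, 0 ≤ h i) (hhsum : ∑ i, h i = 1)
    (hstat : M.mulVec h = h)
    (m : Matrix (Fin n) (Fin n) ℝ) (hm : ∀ j, ∑ i, m i j = 0) :
    ∀ u : Fin n → ℝ,
      ((1 - M).mulVec u = m.mulVec h ∧ ∑ i, u i = 0) ↔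
        u = ((1 - M + vecMulVec h (fun _ => (1 : ℝ)))⁻¹).mulVec (m.mulVec h) := by
  classical
  set A : Matrix (Fin n) (Fin n) ℝ := 1 - M + vecMulVec h (fun _ => (1 : ℝ)) with hAdef
  -- column sums of powers of M
  have colpow : ∀ (N : ℕ) (j : Fin n), ∑ i, (M ^ N) i j = 1 := by
    intro N
    induction N with
    | zero => intro j; simp [Matrix.one_apply]
    | succ k ih =>
      intro j
      rw [pow_succ]
      simp only [Matrix.mul_apply]
      rw [Finset.sum_comm]
      calc ∑ l, ∑ i, (M ^ k) i l * M l j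
          = ∑ l, (∑ i, (M ^ k) i l) * M l j := by
            simp [Finset.sum_mul]
        _ = ∑ l, M l j := by
            refine Finset.sum_congr rfl fun l _ => ?_
            rw [ih l, one_mul]
        _ = 1 := hMcol j
  -- kernel lemma
  have K : ∀ v : Fin n → ℝ, M.mulVec v = v → ∑ i, v i = 0 → v = 0 := by
    intro v hv hsv
    obtain ⟨N, hN⟩ := hprim
    have hPv : (M ^ N).mulVec v = v := by
      clear hN
      induction N with
      | zero => simp
      | succ k ih =>
        rw [pow_succ, ← mulVec_mulVec, hv, ih]
    set P := M ^ N with hPdef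
    have hPcol : ∀ j, ∑ i, P i j = 1 := colpow N
    have hPpos : ∀ i j, 0 < P i j := hN
    have hval : ∀ i, v i = ∑ j, P i j * v j := by
      intro i
      conv_lhs => rw [← hPv]
      rfl
    have habs : ∀ i, |v i| ≤ ∑ j, P i j * |v j| := by
      intro i
      rw [hval i]
      refine (Finset.abs_sum_le_sum_abs _ _).trans ?_
      refine Finset.sum_le_sum fun j _ => ?_
      rw [abs_mul, abs_of_pos (hPpos i j)]
    have hsum_eq : ∑ i, (∑ j, P i j * |v j|) = ∑ i, |v i| := by
      rw [Finset.sum_comm]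
      calc ∑ j, ∑ i, P i j * |v j|
          = ∑ j, (∑ i, P i j) * |v j| := by simp [Finset.sum_mul]
        _ = ∑ j, |v j| := by
            refine Finset.sum_congr rfl fun j _ => ?_
            rw [hPcol j, one_mul]
    have heq : ∀ i, ∑ j, P i j * |v j| = |v i| := by
      have h0 : ∑ i, ((∑ j, P i j * |v j|) - |v i|) = 0 := by
        rw [Finset.sum_sub_distrib, hsum_eq, sub_self]
      have h1 := (Finset.sum_eq_zero_iff_of_nonneg
        (fun i _ => sub_nonneg.mpr (habs i))).mp h0
      intro i
      have h2 := h1 i (Finset.mem_univ i)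
      linarith [h2]
    have hsign : (∀ i, 0 ≤ v i) ∨ (∀ i, v i ≤ 0) := by
      by_contra hc
      push_neg at hc
      obtain ⟨⟨a, ha⟩, ⟨b, hb⟩⟩ := hc
      -- ha : v a < 0, hb : 0 < v b
      have hterm : ∀ j, 0 ≤ P a j * (|v j| - v j) :=
        fun j => mul_nonneg (hPpos a j).le (sub_nonneg.mpr (le_abs_self _))
      have hterm' : ∀ j, 0 ≤ P a j * (|v j| + v j) :=
        fun j => mul_nonneg (hPpos a j).le (by cases abs_choice (v j) with
          | inl hh => rw [hh]; linarith [abs_nonneg (v j), hh]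
          | inr hh => rw [hh]; simp)
      have key1 : |v a| - v a = ∑ j, P a j * (|v j| - v j) := by
        rw [← heq a]
        conv_lhs => rw [hval a]
        rw [← Finset.sum_sub_distrib]
        exact Finset.sum_congr rfl fun j _ => by ring
      have key2 : |v a| + v a = ∑ j, P a j * (|v j| + v j) := by
        rw [← heq a]
        conv_lhs => rw [hval a]
        rw [← Finset.sum_add_distrib]
        exact Finset.sum_congr rfl fun j _ => by ring
      have pos1 : 0 < |v a| - v a := by
        rw [key1]
        have hle : P a a * (|v a| - v a) ≤ ∑ j, P a j * (|v j| - v j) :=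
          Finset.single_le_sum (fun j _ => hterm j) (Finset.mem_univ a)
        have h1 : 0 < P a a * (|v a| - v a) := by
          apply mul_pos (hPpos a a)
          have : |v a| = -v a := abs_of_neg ha
          linarith
        linarith
      have pos2 : 0 < |v a| + v a := by
        rw [key2]
        have hle : P a b * (|v b| + v b) ≤ ∑ j, P a j * (|v j| + v j) :=
          Finset.single_le_sum (fun j _ => hterm' j) (Finset.mem_univ b)
        have h1 : 0 < P a b * (|v b| + v b) := by
          apply mul_pos (hPpos a b)
          have : |v b| = v b := abs_of_pos hb
          linarith
        linarith
      rcases abs_choice (v a) with hc | hc <;> linarith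
    rcases hsign with hs | hs
    · funext i
      have := (Finset.sum_eq_zero_iff_of_nonneg (fun i _ => hs i)).mp hsv i
        (Finset.mem_univ i)
      simpa using this
    · funext i
      have := (Finset.sum_eq_zero_iff_of_nonpos (fun i _ => hs i)).mp hsv i
        (Finset.mem_univ i)
      simpa using this
  -- mulVec of A
  have hAmul : ∀ v : Fin n → ℝ,
      A.mulVec v = (1 - M).mulVec v + fun i => h i * ∑ j, v j := by
    intro v
    rw [hAdef, add_mulVec]
    congr 1
    funext i
    simp [mulVec, vecMulVec, dotProduct, Finset.mul_sum]
  -- sums under mulVec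
  have hMsum : ∀ v : Fin n → ℝ, ∑ i, M.mulVec v i = ∑ j, v j := by
    intro v
    simp only [mulVec, dotProduct]
    rw [Finset.sum_comm]
    calc ∑ j, ∑ i, M i j * v j
        = ∑ j, (∑ i, M i j) * v j := by simp [Finset.sum_mul]
      _ = ∑ j, v j := by
          refine Finset.sum_congr rfl fun j _ => ?_
          rw [hMcol j, one_mul]
  have hsumA : ∀ v : Fin n → ℝ, ∑ i, A.mulVec v i = ∑ i, v i := by
    intro v
    rw [hAmul v]
    simp only [Pi.add_apply, sub_mulVec, one_mulVec, Pi.sub_apply]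
    rw [Finset.sum_add_distrib, Finset.sum_sub_distrib, hMsum v,
      ← Finset.sum_mul, hhsum, one_mul]
    ring
  -- invertibility of A
  have hdet : A.det ≠ 0 := by
    intro h0
    obtain ⟨v, hvne, hv⟩ := (Matrix.exists_mulVec_eq_zero_iff).mpr h0
    have hsv : ∑ i, v i = 0 := by
      rw [← hsumA v, hv]
      simp
    have h1 : (1 - M).mulVec v = 0 := by
      have h2 := hAmul v
      rw [hv] at h2
      funext i
      have h3 := congrFun h2 i
      simp only [Pi.add_apply, Pi.zero_apply] at h3 ⊢
      rw [hsv, mul_zero, add_zero] at h3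
      exact h3.symm
    have h4 : M.mulVec v = v := by
      have h5 := congrArg (fun w => M.mulVec v + w) h1
      simpa [sub_mulVec, one_mulVec] using h5.symm
    exact hvne (K v h4 hsv)
  have hAunit : IsUnit A.det := isUnit_iff_ne_zero.mpr hdet
  have hmh : ∑ i, m.mulVec h i = 0 := by
    simp only [mulVec, dotProduct]
    rw [Finset.sum_comm]
    calc ∑ j, ∑ i, m i j * h j
        = ∑ j, (∑ i, m i j) * h j := by simp [Finset.sum_mul]
      _ = 0 := by
          refine Finset.sum_eq_zero fun j _ => ?_
          rw [hm j, zero_mul]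
  intro u
  constructor
  · rintro ⟨h1, h2⟩
    have hAu : A.mulVec u = m.mulVec h := by
      rw [hAmul u, h1, h2]
      funext i
      simp
    calc u = (1 : Matrix (Fin n) (Fin n) ℝ).mulVec u := (one_mulVec u).symm
      _ = (A⁻¹ * A).mulVec u := by rw [Matrix.nonsing_inv_mul A hAunit]
      _ = A⁻¹.mulVec (A.mulVec u) := (mulVec_mulVec u A⁻¹ A).symm
      _ = A⁻¹.mulVec (m.mulVec h) := by rw [hAu]
  · intro hu
    have hAu : A.mulVec u = m.mulVec h := by
      rw [hu, mulVec_mulVec, Matrix.mul_nonsing_inv A hAunit, one_mulVec]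
    have hsu : ∑ i, u i = 0 := by
      rw [← hsumA u, hAu]
      exact hmh
    refine ⟨?_, hsu⟩
    funext i
    have h3 := congrFun (hAmul u) i
    have h4 := congrFun hAu i
    simp only [Pi.add_apply] at h3
    rw [hsu, mul_zero, add_zero] at h3
    rw [← h3]
    exact h4
end

section
/- For an n×n column stochastic primitive matrix M with stationary distribution h, the matrix Id - M + h 1^T is invertible. -/
open Matrix BigOperators

/-- For a column stochastic primitive matrix `M` with stationary distribution `h`,
the matrix `Id - M + h 1ᵀ` is invertible. -/
theorem stmt_1 {n : ℕ} (M : Matrix (Fin n) (Fin n) ℝ)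
    (hM0 : ∀ i j, 0 ≤ M i j) (hMcol : ∀ j, ∑ i, M i j = 1)
    (hprim : ∃ N : ℕ, ∀ i j, 0 < (M ^ N) i j)
    (h : Fin n → ℝ) (hh0 : ∀ i, 0 ≤ h i) (hhsum : ∑ i, h i = 1)
    (hstat : M.mulVec h = h) :
    IsUnit (1 - M + vecMulVec h (fun _ => (1 : ℝ))) := by
  rcases Nat.eq_zero_or_pos n with hn | hn
  · subst hn; simp at hhsum
  haveI : Nonempty (Fin n) := ⟨⟨0, hn⟩⟩
  rw [Matrix.isUnit_iff_isUnit_det, isUnit_iff_ne_zero]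
  intro hdet
  obtain ⟨v, hv, hAv⟩ := (Matrix.exists_mulVec_eq_zero_iff).mpr hdet
  -- expand the equation componentwise
  have key : ∀ i, v i - (M.mulVec v) i + h i * (∑ j, v j) = 0 := by
    intro i
    have h1 := congrFun hAv i
    rw [Matrix.add_mulVec, Matrix.sub_mulVec, Matrix.one_mulVec] at h1
    have h2 : (vecMulVec h (fun _ => (1:ℝ))).mulVec v i = h i * ∑ j, v j := by
      simp [Matrix.mulVec, Matrix.vecMulVec_apply, dotProduct, Finset.mul_sum]
    simp only [Pi.add_apply, Pi.sub_apply, Pi.zero_apply] at h1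
    rw [h2] at h1
    exact h1
  -- sum of entries of M.mulVec v equals sum of v
  have hsumM : ∑ i, (M.mulVec v) i = ∑ j, v j := by
    simp only [Matrix.mulVec, dotProduct]
    rw [Finset.sum_comm]
    simp_rw [← Finset.sum_mul, hMcol, one_mul]
  -- hence sum of v is 0
  have hS : ∑ j, v j = 0 := by
    have h2 : ∑ i, (v i - (M.mulVec v) i + h i * (∑ j, v j)) = 0 := by
      rw [Finset.sum_congr rfl (fun i _ => (key i))]; simp
    rw [Finset.sum_add_distrib, Finset.sum_sub_distrib, hsumM, ← Finset.sum_mul,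
      hhsum, one_mul, sub_self, zero_add] at h2
    exact h2
  -- hence M.mulVec v = v
  have hMv : M.mulVec v = v := by
    funext i
    have := key i
    rw [hS, mul_zero, add_zero, sub_eq_zero] at this
    exact this.symm
  have hpowv' : ∀ k, (M ^ k).mulVec v = v := by
    intro k
    induction k with
    | zero => simp
    | succ k ih =>
      rw [pow_succ', ← Matrix.mulVec_mulVec, ih, hMv]
  have hpowh' : ∀ k, (M ^ k).mulVec h = h := by
    intro k
    induction k with
    | zero => simp
    | succ k ih =>
      rw [pow_succ', ← Matrix.mulVec_mulVec, ih, hstat]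
  obtain ⟨N, hN⟩ := hprim
  have hpowv := hpowv' N
  have hpowh := hpowh' N
  -- h is strictly positive
  have hexj : ∃ j, 0 < h j := by
    by_contra hc
    push_neg at hc
    have : ∀ j, h j = 0 := fun j => le_antisymm (hc j) (hh0 j)
    simp [this] at hhsum
  obtain ⟨j₀, hj₀⟩ := hexj
  have hpos : ∀ i, 0 < h i := by
    intro i
    have := congrFun hpowh i
    rw [← this]
    simp only [Matrix.mulVec, dotProduct]
    apply Finset.sum_pos'
    · exact fun j _ => mul_nonneg (hN i j).le (hh0 j)
    · exact ⟨j₀, Finset.mem_univ _, mul_pos (hN i j₀) hj₀⟩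
  -- take the maximizer of v i / h i
  obtain ⟨i₀, -, hi₀⟩ := Finset.exists_max_image Finset.univ (fun i => v i / h i)
    ⟨Classical.arbitrary _, Finset.mem_univ _⟩
  set t := v i₀ / h i₀ with ht
  set y : Fin n → ℝ := fun j => t * h j - v j with hy
  have hy0 : ∀ j, 0 ≤ y j := by
    intro j
    have := hi₀ j (Finset.mem_univ _)
    have := (div_le_iff₀ (hpos j)).mp this
    simp only [hy]
    linarith [this]
  have hyi₀ : y i₀ = 0 := by
    simp only [hy, ht]
    rw [div_mul_cancel₀ _ (hpos i₀).ne']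
    ring
  have hypow : (M ^ N).mulVec y = y := by
    have : y = t • h - v := by funext j; simp [hy, smul_eq_mul]
    rw [this, Matrix.mulVec_sub, Matrix.mulVec_smul, hpowh, hpowv]
  -- all y j = 0
  have hyzero : ∀ j, y j = 0 := by
    have h0 : ∑ j, (M ^ N) i₀ j * y j = 0 := by
      have := congrFun hypow i₀
      simp only [Matrix.mulVec, dotProduct] at this
      rw [this, hyi₀]
    have := (Finset.sum_eq_zero_iff_of_nonneg
      (fun j _ => mul_nonneg (hN i₀ j).le (hy0 j))).mp h0
    intro j
    have hj := this j (Finset.mem_univ _)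
    rcases mul_eq_zero.mp hj with hc | hc
    · exact absurd hc (hN i₀ j).ne'
    · exact hc
  -- hence v = t • h, and t = 0 from sum
  have hvt : ∀ j, v j = t * h j := by
    intro j
    have := hyzero j
    simp only [hy] at this
    linarith
  have ht0 : t = 0 := by
    have : ∑ j, v j = t * ∑ j, h j := by
      rw [Finset.mul_sum]
      exact Finset.sum_congr rfl fun j _ => hvt j
    rw [hS, hhsum, mul_one] at this
    exact this.symm
  apply hv
  funext j
  rw [hvt j, ht0, zero_mul]; rfl
end

section
/- The fundamental matrix Q = (Id - M + h 1^T)^{-1} is a generalized inverse of Id - M, i.e., (Id - M) Q (Id - M) = Id - M. -/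
open Matrix

namespace Matrix

variable {m n R : Type*} [Fintype m] [DecidableEq m] [CommRing R]

/-- `L` commutes with `L + P` because both cross products vanish, hence also with its inverse. -/
theorem mul_nonsing_inv_add_mul_self {L P : Matrix m m R} (hLP : L * P = 0) (hPL : P * L = 0)
    (hA : IsUnit (L + P)) : L * (L + P)⁻¹ * L = L := by
  obtain ⟨u, hu⟩ := hA
  have hcomm : Commute L u := by
    rw [hu]
    simp only [Commute, SemiconjBy, mul_add, add_mul, hLP, hPL]
  have hinv : (L + P)⁻¹ = ↑u⁻¹ := by rw [← hu, coe_units_inv]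
  calc L * (L + P)⁻¹ * L = L * (L + P)⁻¹ * ((L + P) - P) := by rw [add_sub_cancel_right]
    _ = L - ↑u⁻¹ * (L * P) := by
      rw [hinv, mul_sub, ← hu, mul_assoc, Units.inv_mul, mul_one,
        ← mul_assoc, hcomm.units_inv_right.eq, mul_assoc]
    _ = L := by rw [hLP, mul_zero, sub_zero]

theorem one_sub_mul_vecMulVec_eq_zero {M : Matrix m m R} {x : m → R} (y : n → R)
    (hx : M *ᵥ x = x) : (1 - M) * vecMulVec x y = 0 := by
  rw [mul_vecMulVec, sub_mulVec, one_mulVec, hx, sub_self, zero_vecMulVec]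

theorem vecMulVec_mul_one_sub_eq_zero {M : Matrix m m R} (x : n → R) {y : m → R}
    (hy : y ᵥ* M = y) : vecMulVec x y * (1 - M) = 0 := by
  rw [vecMulVec_mul, vecMul_sub, vecMul_one, hy, sub_self]
  exact ext fun _ _ => mul_zero _

end Matrix

theorem stmt_2_general {n : ℕ} (M : Matrix (Fin n) (Fin n) ℝ)
    (hMcol : ∀ j, ∑ i, M i j = 1)
    (h : Fin n → ℝ)
    (hstat : M.mulVec h = h)
    (hinv : IsUnit (1 - M + vecMulVec h (fun _ => (1 : ℝ)))) :
    (1 - M) * (1 - M + vecMulVec h (fun _ => (1 : ℝ)))⁻¹ * (1 - M) = 1 - M := by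
  have hones : (fun _ => (1 : ℝ)) ᵥ* M = fun _ => 1 := by
    ext j
    simpa [vecMul, dotProduct] using hMcol j
  exact mul_nonsing_inv_add_mul_self (one_sub_mul_vecMulVec_eq_zero _ hstat)
    (vecMulVec_mul_one_sub_eq_zero _ hones) hinv

/-- The fundamental matrix `Q = (Id - M + h 1ᵀ)⁻¹` is a generalized inverse of
`Id - M`: one has `(Id - M) Q (Id - M) = Id - M`. -/
theorem stmt_2 {n : ℕ} (M : Matrix (Fin n) (Fin n) ℝ)
    (hM0 : ∀ i j, 0 ≤ M i j) (hMcol : ∀ j, ∑ i, M i j = 1)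
    (hprim : ∃ N : ℕ, ∀ i j, 0 < (M ^ N) i j)
    (h : Fin n → ℝ) (hh0 : ∀ i, 0 ≤ h i) (hhsum : ∑ i, h i = 1)
    (hstat : M.mulVec h = h)
    (hinv : IsUnit (1 - M + vecMulVec h (fun _ => (1 : ℝ)))) :
    (1 - M) * (1 - M + vecMulVec h (fun _ => (1 : ℝ)))⁻¹ * (1 - M) = 1 - M :=
  stmt_2_general M hMcol h hstat hinv
end

section
/- Let A be the (n + n₁) × n² matrix formed by stacking Id_n ⊗ 1^T together with the standard basis row vectors e_γ^T for each index γ at which vec(M) equals 0 or 1, where M is an n×n column stochastic matrix with n₁ zero entries and M has no column of the form a standard basis vector. Then A has full row rank n + n₁, so its nullity is n² − (n + n₁). -/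
open Matrix BigOperators

/-- The matrix obtained by stacking `Id_n ⊗ 1ᵀ` with the standard basis rows
`e_γᵀ` for the indices `γ` enumerated by `γ : Fin n₁ → Fin n × Fin n`
(indices in column-stacking/vec order, so column index `p = (j, k)` of the big
matrix corresponds to entry `m k j`). -/
def stackA (n n₁ : ℕ) (γ : Fin n₁ → Fin n × Fin n) :
    Matrix (Fin n ⊕ Fin n₁) (Fin n × Fin n) ℝ :=
  Matrix.of fun r p =>
    Sum.rec (fun i => if p.1 = i then (1 : ℝ) else 0)
      (fun t => if γ t = p then (1 : ℝ) else 0) r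

/-- For a column stochastic `M` with `n₁` zero entries, no entry equal to `1`, and
`γ` enumerating the positions where `vec(M)` equals `0` or `1`, the stacked
constraint matrix has full row rank `n + n₁`, hence nullity `n² - (n + n₁)`. -/
theorem stmt_10 {n n₁ : ℕ} (M : Matrix (Fin n) (Fin n) ℝ)
    (hM0 : ∀ i j, 0 ≤ M i j) (hM1 : ∀ i j, M i j ≤ 1)
    (hMcol : ∀ j, ∑ i, M i j = 1)
    (hno1 : ∀ i j, M i j ≠ 1)
    (γ : Fin n₁ → Fin n × Fin n) (hγinj : Function.Injective γ)
    (hγ : ∀ p : Fin n × Fin n, (∃ k, γ k = p) ↔ (M p.2 p.1 = 0 ∨ M p.2 p.1 = 1)) :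
    (stackA n n₁ γ).rank = n + n₁ ∧
      Module.finrank ℝ (LinearMap.ker (stackA n n₁ γ).mulVecLin) = n ^ 2 - (n + n₁) := by
  -- rows are linearly independent: kernel of the transpose is trivial
  have hker : LinearMap.ker (stackA n n₁ γ)ᵀ.mulVecLin = ⊥ := by
    rw [LinearMap.ker_eq_bot']
    intro v hv
    have hv' : ∀ p : Fin n × Fin n,
        v (Sum.inl p.1) + ∑ t, (if γ t = p then v (Sum.inr t) else 0) = 0 := by
      intro p
      have h := congrFun hv p
      simp only [Matrix.mulVecLin_apply, Matrix.mulVec, dotProduct,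
        Matrix.transpose_apply, stackA, Matrix.of_apply, Pi.zero_apply,
        Fintype.sum_sum_type, ite_mul, one_mul, zero_mul] at h
      rw [Finset.sum_ite_eq (Finset.univ) p.1 (fun i => v (Sum.inl i))] at h
      simpa using h
    -- the identity-block coefficients vanish
    have hinl : ∀ j : Fin n, v (Sum.inl j) = 0 := by
      intro j
      -- find an entry of column j not in {0,1}
      have hex : ∃ k : Fin n, M k j ≠ 0 ∧ M k j ≠ 1 := by
        by_contra hcon
        push_neg at hcon
        have hall : ∀ k, M k j = 0 := by
          intro k
          rcases eq_or_ne (M k j) 0 with h0 | h0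
          · exact h0
          · exact absurd (hcon k h0) (hno1 k j)
        have := hMcol j
        simp [hall] at this
      obtain ⟨k, hk0, hk1⟩ := hex
      have hnot : ∀ t, γ t ≠ (j, k) := by
        intro t ht
        have := (hγ (j, k)).mp ⟨t, ht⟩
        simp at this
        tauto
      have := hv' (j, k)
      rw [Finset.sum_eq_zero (fun t _ => if_neg (hnot t))] at this
      simpa using this
    have hinr : ∀ t : Fin n₁, v (Sum.inr t) = 0 := by
      intro t
      have := hv' (γ t)
      rw [hinl (γ t).1] at this
      have hsum : ∑ t', (if γ t' = γ t then v (Sum.inr t') else 0) = v (Sum.inr t) := by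
        have he : ∀ t' : Fin n₁, (if γ t' = γ t then v (Sum.inr t') else 0)
            = (if t' = t then v (Sum.inr t') else 0) := fun t' => by
          simp [hγinj.eq_iff]
        rw [Finset.sum_congr rfl fun t' _ => he t']
        simp
      rw [hsum] at this
      linarith
    funext r
    cases r with
    | inl i => exact hinl i
    | inr t => exact hinr t
  have hrankT : (stackA n n₁ γ)ᵀ.rank = n + n₁ := by
    have h := LinearMap.finrank_range_add_finrank_ker (stackA n n₁ γ)ᵀ.mulVecLin
    rw [hker, finrank_bot] at h
    rw [Matrix.rank]
    simpa [Module.finrank_fintype_fun_eq_card, Fintype.card_sum] using h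
  have hrank : (stackA n n₁ γ).rank = n + n₁ := by
    rw [← Matrix.rank_transpose]; exact hrankT
  refine ⟨hrank, ?_⟩
  have h2 := LinearMap.finrank_range_add_finrank_ker (stackA n n₁ γ).mulVecLin
  rw [show Module.finrank ℝ (LinearMap.range (stackA n n₁ γ).mulVecLin) = n + n₁ from hrank] at h2
  have hdom : Module.finrank ℝ (Fin n × Fin n → ℝ) = n ^ 2 := by
    simp [Module.finrank_fintype_fun_eq_card, Fintype.card_prod, sq]
  rw [hdom] at h2
  omega
end

section
/- For the 2×2 positive column stochastic matrix M with off-diagonals M₁₂, M₂₁, the maximum of ‖Q m h‖₂² over 2×2 matrices m with columns summing to zero and Frobenius norm 1 equals (M₁₂² + M₂₁²)/(M₁₂ + M₂₁)⁴, where Q is the fundamental matrix and h the stationary vector. -/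
open Matrix BigOperators

/-!
Zero column sums make `m h` a zero-sum vector, and on zero-sum vectors `M` acts as multiplication
by its second eigenvalue `1 - (M₁₂ + M₂₁)` while `h 1ᵀ` vanishes; hence `Q m h = m h / (M₁₂ + M₂₁)`.
If `(x, y)` is the first row of `m`, the second is `(-x, -y)`, so the constraint reads
`x² + y² = 1/2` and `m h = t • (1, -1)` with `t = (x M₁₂ + y M₂₁) / (M₁₂ + M₂₁)`. The objective is
therefore `2 (x M₁₂ + y M₂₁)² / (M₁₂ + M₂₁)⁴`, which Cauchy–Schwarz bounds by
`(M₁₂² + M₂₁²) / (M₁₂ + M₂₁)⁴`, with equality when `(x, y)` is proportional to `(M₁₂, M₂₁)`.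
-/

theorem Matrix.sum_mulVec_eq_zero_of_sum_col_eq_zero {l n R : Type*} [Fintype l] [Fintype n]
    [CommRing R] {m : Matrix l n R} (hm : ∀ j, ∑ i, m i j = 0) (x : n → R) :
    ∑ i, (m *ᵥ x) i = 0 := by
  simp only [mulVec, dotProduct]
  rw [Finset.sum_comm]
  simp [← Finset.sum_mul, hm]

noncomputable section

namespace TwoStateChain

variable (a b : ℝ)

def transition : Matrix (Fin 2) (Fin 2) ℝ := !![1 - b, a; b, 1 - a]

def stationary : Fin 2 → ℝ := ![a / (a + b), b / (a + b)]

def fundamentalInv : Matrix (Fin 2) (Fin 2) ℝ :=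
  1 - transition a b + vecMulVec (stationary a b) (fun _ => 1)

def fundamental : Matrix (Fin 2) (Fin 2) ℝ := (fundamentalInv a b)⁻¹

variable {a b}

theorem det_fundamentalInv (hab : a + b ≠ 0) : (fundamentalInv a b).det = a + b := by
  simp only [fundamentalInv, transition, stationary, det_fin_two, Matrix.add_apply, Matrix.sub_apply,
    one_apply_eq, one_apply_ne, of_apply, vecMulVec_apply, cons_val', cons_val_zero, cons_val_one,
    cons_val_fin_one, Fin.isValue, mul_one, ne_eq, zero_ne_one, one_ne_zero, not_false_eq_true]
  field_simp
  ring

theorem transition_mulVec {v : Fin 2 → ℝ} (hv : ∑ i, v i = 0) :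
    transition a b *ᵥ v = (1 - (a + b)) • v := by
  have hv1 : v 1 = -v 0 := by
    rw [Fin.sum_univ_two] at hv
    linear_combination hv
  ext i
  fin_cases i <;>
    simp only [transition, mulVec, dotProduct, Fin.sum_univ_two, of_apply, cons_val', cons_val_zero,
      cons_val_one, cons_val_fin_one, Fin.zero_eta, Fin.mk_one, Fin.isValue, hv1, Pi.smul_apply,
      smul_eq_mul] <;>
    ring

theorem fundamentalInv_mulVec {v : Fin 2 → ℝ} (hv : ∑ i, v i = 0) :
    fundamentalInv a b *ᵥ v = (a + b) • v := by
  have hπ : (fun _ => (1 : ℝ)) ⬝ᵥ v = 0 := by simpa [dotProduct] using hv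
  rw [fundamentalInv, add_mulVec, sub_mulVec, one_mulVec, transition_mulVec hv, vecMulVec_mulVec, hπ,
    MulOpposite.op_zero, zero_smul]
  module

theorem fundamental_mulVec (hab : a + b ≠ 0) {v : Fin 2 → ℝ} (hv : ∑ i, v i = 0) :
    fundamental a b *ᵥ v = (a + b)⁻¹ • v := by
  have : Invertible (fundamentalInv a b) :=
    invertibleOfIsUnitDet _ (by rw [det_fundamentalInv hab]; exact hab.isUnit)
  refine inv_mulVec_eq_vec ?_
  have hv' : ∑ i, ((a + b)⁻¹ • v) i = 0 := by simp [← Finset.mul_sum, hv]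
  rw [fundamentalInv_mulVec hv', smul_smul, mul_inv_cancel₀ hab, one_smul]

theorem sum_sq_fundamental_mulVec_stationary (hab : a + b ≠ 0) {m : Matrix (Fin 2) (Fin 2) ℝ}
    (hm : ∀ j, ∑ i, m i j = 0) :
    ∑ i, (fundamental a b *ᵥ (m *ᵥ stationary a b)) i ^ 2
      = 2 * (m 0 0 * a + m 0 1 * b) ^ 2 / (a + b) ^ 4 := by
  have hu := sum_mulVec_eq_zero_of_sum_col_eq_zero hm (stationary a b)
  rw [fundamental_mulVec hab hu]
  have h1 : (m *ᵥ stationary a b) 1 = -(m *ᵥ stationary a b) 0 := by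
    rw [Fin.sum_univ_two] at hu
    linear_combination hu
  have h0 : (m *ᵥ stationary a b) 0 = (m 0 0 * a + m 0 1 * b) / (a + b) := by
    simp only [mulVec, dotProduct, stationary, Fin.sum_univ_two, cons_val_zero, cons_val_one,
      cons_val_fin_one, Fin.isValue]
    ring
  simp only [Fin.sum_univ_two, Pi.smul_apply, smul_eq_mul, h1, h0]
  field_simp
  ring

theorem sum_sq_fundamental_mulVec_stationary_le (hab : a + b ≠ 0)
    {m : Matrix (Fin 2) (Fin 2) ℝ} (hm : ∀ j, ∑ i, m i j = 0) (hnorm : ∑ i, ∑ j, m i j ^ 2 = 1) :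
    ∑ i, (fundamental a b *ᵥ (m *ᵥ stationary a b)) i ^ 2 ≤ (a ^ 2 + b ^ 2) / (a + b) ^ 4 := by
  rw [sum_sq_fundamental_mulVec_stationary hab hm]
  have hrow : m 0 0 ^ 2 + m 0 1 ^ 2 = 1 / 2 := by
    have h0 := hm 0
    have h1 := hm 1
    simp only [Fin.sum_univ_two] at h0 h1 hnorm
    rw [eq_neg_of_add_eq_zero_right h0, eq_neg_of_add_eq_zero_right h1] at hnorm
    linarith
  gcongr
  nlinarith [sq_nonneg (m 0 0 * b - m 0 1 * a)]

theorem exists_sum_sq_fundamental_mulVec_stationary_eq (hab : a + b ≠ 0) :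
    ∃ m : Matrix (Fin 2) (Fin 2) ℝ, (∀ j, ∑ i, m i j = 0) ∧ ∑ i, ∑ j, m i j ^ 2 = 1 ∧
      ∑ i, (fundamental a b *ᵥ (m *ᵥ stationary a b)) i ^ 2 = (a ^ 2 + b ^ 2) / (a + b) ^ 4 := by
  have hq : 0 < 2 * (a ^ 2 + b ^ 2) := by
    nlinarith [sq_pos_of_ne_zero hab, sq_nonneg (a - b)]
  set r := √(2 * (a ^ 2 + b ^ 2))
  have hr : r ^ 2 = 2 * (a ^ 2 + b ^ 2) := Real.sq_sqrt hq.le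
  have hr0 : r ≠ 0 := (Real.sqrt_pos.mpr hq).ne'
  have hm : ∀ j, ∑ i, !![a / r, b / r; -(a / r), -(b / r)] i j = 0 := by
    intro j; fin_cases j <;> simp [Fin.sum_univ_two]
  refine ⟨_, hm, ?_, ?_⟩
  · simp only [Fin.sum_univ_two, of_apply, cons_val', cons_val_zero, cons_val_one, cons_val_fin_one,
      Fin.isValue, even_two, Even.neg_pow]
    field_simp
    linear_combination hr.symm
  · rw [sum_sq_fundamental_mulVec_stationary hab hm]
    simp only [of_apply, cons_val', cons_val_zero, cons_val_one, cons_val_fin_one, Fin.isValue]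
    field_simp
    linear_combination (-(a ^ 2 + b ^ 2)) * hr

end TwoStateChain

end

theorem stmt_15_general (M₁₂ M₂₁ : ℝ) (h12 : 0 < M₁₂) (h21 : 0 < M₂₁) :
    IsGreatest
      {x : ℝ | ∃ m : Matrix (Fin 2) (Fin 2) ℝ,
        (∀ j, ∑ i, m i j = 0) ∧ (∑ i, ∑ j, (m i j) ^ 2 = 1) ∧
        x = ∑ i,
          (((1 - !![1 - M₂₁, M₁₂; M₂₁, 1 - M₁₂]
              + vecMulVec ![M₁₂ / (M₁₂ + M₂₁), M₂₁ / (M₁₂ + M₂₁)]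
                  (fun _ : Fin 2 => (1 : ℝ)))⁻¹).mulVec
            (m.mulVec ![M₁₂ / (M₁₂ + M₂₁), M₂₁ / (M₁₂ + M₂₁)]) i) ^ 2}
      ((M₁₂ ^ 2 + M₂₁ ^ 2) / (M₁₂ + M₂₁) ^ 4) := by
  have hab : M₁₂ + M₂₁ ≠ 0 := by positivity
  refine ⟨?_, ?_⟩
  · obtain ⟨m, hm, hnorm, hval⟩ := TwoStateChain.exists_sum_sq_fundamental_mulVec_stationary_eq hab
    exact ⟨m, hm, hnorm, hval.symm⟩
  · rintro x ⟨m, hm, hnorm, rfl⟩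
    exact TwoStateChain.sum_sq_fundamental_mulVec_stationary_le hab hm hnorm

/-- For the positive `2×2` column stochastic matrix with off-diagonals `M₁₂, M₂₁`,
the maximum of `‖Q m h‖₂²` over `2×2` matrices `m` with zero column sums and unit
Frobenius norm equals `(M₁₂² + M₂₁²)/(M₁₂ + M₂₁)⁴`. -/
theorem stmt_15 (M₁₂ M₂₁ : ℝ) (h12 : 0 < M₁₂) (h12' : M₁₂ < 1)
    (h21 : 0 < M₂₁) (h21' : M₂₁ < 1) :
    IsGreatest
      {x : ℝ | ∃ m : Matrix (Fin 2) (Fin 2) ℝ,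
        (∀ j, ∑ i, m i j = 0) ∧ (∑ i, ∑ j, (m i j) ^ 2 = 1) ∧
        x = ∑ i,
          (((1 - !![1 - M₂₁, M₁₂; M₂₁, 1 - M₁₂]
              + vecMulVec ![M₁₂ / (M₁₂ + M₂₁), M₂₁ / (M₁₂ + M₂₁)]
                  (fun _ : Fin 2 => (1 : ℝ)))⁻¹).mulVec
            (m.mulVec ![M₁₂ / (M₁₂ + M₂₁), M₂₁ / (M₁₂ + M₂₁)]) i) ^ 2}
      ((M₁₂ ^ 2 + M₂₁ ^ 2) / (M₁₂ + M₂₁) ^ 4) :=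
  stmt_15_general M₁₂ M₂₁ h12 h21
end
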